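/- Let A be a Banach algebra and I a closed two-sided ideal of A that is Arens regular and has a bounded approximate identity (e_α). Then (e_α) is quasi-central in A: for every a ∈ A, a e_α − e_α a → 0 weakly (any weak* cluster point E of (e_α) in I** is the identity of I** and satisfies aE = Ea for all a ∈ A). -/

import Mathlib

/-!
A weak* cluster point `E` of the approximate identity satisfies `E (f·x) = f x = E (x·f)`, so it
is a right identity for the first Arens product and a left identity for the second; by Arens
regularity it is a two-sided identity of `I**`. The module identity `F □ (a·G) = (F·a) □ G` then
gives `a·E = E □ (a·E) = (E·a) □ E = E·a`. By Banach–Alaoglu such a cluster point exists along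
every ultrafilter finer than the given filter, and along each of them `f (a eᵢ - eᵢ a)` tends to
`E (f·a) - E (a·f) = 0`.
-/

open ContinuousLinearMap Filter Topology

namespace Paper

structure Bimod (A : Type*) [NormedRing A] [NormedAlgebra ℂ A]
    (X : Type*) [NormedAddCommGroup X] [NormedSpace ℂ X] where
  l : A → X →L[ℂ] X
  r : A → X →L[ℂ] X
  l_mul : ∀ a b x, l (a * b) x = l a (l b x)
  r_mul : ∀ a b x, r (a * b) x = r b (r a x)
  lr : ∀ a b x, l a (r b x) = r b (l a x)

variable {A : Type*} [NormedRing A] [NormedAlgebra ℂ A]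
variable {X : Type*} [NormedAddCommGroup X] [NormedSpace ℂ X]

noncomputable def Bimod.dual (M : Bimod A X) : Bimod A (X →L[ℂ] ℂ) where
  l a := (compL ℂ X X ℂ).flip (M.r a)
  r a := (compL ℂ X X ℂ).flip (M.l a)
  l_mul a b f := by ext x; simp [M.r_mul]
  r_mul a b f := by ext x; simp [M.l_mul]
  lr a b f := by ext x; simp [M.lr]

def IsDerivation (M : Bimod A X) (D : A →L[ℂ] X) : Prop :=
  ∀ a b, D (a * b) = M.l a (D b) + M.r b (D a)

def IsInner (M : Bimod A X) (D : A →L[ℂ] X) : Prop :=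
  ∃ x, ∀ a, D a = M.l a x - M.r a x

noncomputable def Bimod.restrict (M : Bimod A X) (Y : Submodule ℂ X)
    (hl : ∀ a, ∀ y ∈ Y, M.l a y ∈ Y) (hr : ∀ a, ∀ y ∈ Y, M.r a y ∈ Y) :
    Bimod A Y where
  l a := ((M.l a).comp Y.subtypeL).codRestrict Y fun y => hl a y y.2
  r a := ((M.r a).comp Y.subtypeL).codRestrict Y fun y => hr a y y.2
  l_mul a b y := Subtype.ext (M.l_mul a b y)
  r_mul a b y := Subtype.ext (M.r_mul a b y)
  lr a b y := Subtype.ext (M.lr a b y)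

noncomputable def algBimod (A : Type*) [NormedRing A] [NormedAlgebra ℂ A] : Bimod A A where
  l a := ContinuousLinearMap.mul ℂ A a
  r a := (ContinuousLinearMap.mul ℂ A).flip a
  l_mul a b x := mul_assoc a b x
  r_mul a b x := (mul_assoc x a b).symm
  lr a b x := (mul_assoc a x b).symm

noncomputable def idealBimod (I : Submodule ℂ A)
    (hL : ∀ a, ∀ x ∈ I, a * x ∈ I) (hR : ∀ a, ∀ x ∈ I, x * a ∈ I) :
    Bimod A I where
  l a := ((ContinuousLinearMap.mul ℂ A a).comp I.subtypeL).codRestrict I fun x => hL a x x.2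
  r a := (((ContinuousLinearMap.mul ℂ A).flip a).comp I.subtypeL).codRestrict I fun x => hR a x x.2
  l_mul a b x := Subtype.ext (mul_assoc a b (x : A))
  r_mul a b x := Subtype.ext (mul_assoc (x : A) a b).symm
  lr a b x := Subtype.ext (mul_assoc a (x : A) b).symm

/-- For $f ∈ I^*$ and $x ∈ I$, the map $x ↦ f·x$ where $(f·x)(y) = f(xy)$. -/
noncomputable def lmap (I : Submodule ℂ A)
    (hL : ∀ a : A, ∀ x ∈ I, a * x ∈ I) (hR : ∀ a : A, ∀ x ∈ I, x * a ∈ I)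
    (f : ↥I →L[ℂ] ℂ) : ↥I →L[ℂ] (↥I →L[ℂ] ℂ) :=
  LinearMap.mkContinuous
    { toFun := fun (x : ↥I) => f.comp ((idealBimod I hL hR).l (x : A))
      map_add' := fun x y => by
        ext z
        show f ((idealBimod I hL hR).l ((x : A) + (y : A)) z) =
          f ((idealBimod I hL hR).l (x : A) z) + f ((idealBimod I hL hR).l (y : A) z)
        rw [← map_add]
        congr 1
        exact Subtype.ext (add_mul (x : A) (y : A) (z : A))
      map_smul' := fun (c : ℂ) (x : ↥I) => by
        ext z
        show f ((idealBimod I hL hR).l ((c • x : ↥I) : A) z) =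
          c • f ((idealBimod I hL hR).l (x : A) z)
        rw [← map_smul]
        congr 1
        exact Subtype.ext (smul_mul_assoc c (x : A) (z : A)) }
    ‖f‖ (fun x => by
      refine (ContinuousLinearMap.opNorm_comp_le _ _).trans ?_
      have hx : ‖(idealBimod I hL hR).l (x : A)‖ ≤ ‖x‖ := by
        refine ContinuousLinearMap.opNorm_le_bound _ (norm_nonneg x) fun z => ?_
        calc ‖(idealBimod I hL hR).l (x : A) z‖ = ‖(x : A) * (z : A)‖ := rfl
          _ ≤ ‖(x : A)‖ * ‖(z : A)‖ := norm_mul_le _ _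
          _ = ‖x‖ * ‖z‖ := rfl
      exact mul_le_mul_of_nonneg_left hx (norm_nonneg f))

/-- For $f ∈ I^*$ and $x ∈ I$, the map $x ↦ x·f$ where $(x·f)(y) = f(yx)$. -/
noncomputable def rmap (I : Submodule ℂ A)
    (hL : ∀ a : A, ∀ x ∈ I, a * x ∈ I) (hR : ∀ a : A, ∀ x ∈ I, x * a ∈ I)
    (f : ↥I →L[ℂ] ℂ) : ↥I →L[ℂ] (↥I →L[ℂ] ℂ) :=
  LinearMap.mkContinuous
    { toFun := fun (x : ↥I) => f.comp ((idealBimod I hL hR).r (x : A))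
      map_add' := fun x y => by
        ext z
        show f ((idealBimod I hL hR).r ((x : A) + (y : A)) z) =
          f ((idealBimod I hL hR).r (x : A) z) + f ((idealBimod I hL hR).r (y : A) z)
        rw [← map_add]
        congr 1
        exact Subtype.ext (mul_add (z : A) (x : A) (y : A))
      map_smul' := fun (c : ℂ) (x : ↥I) => by
        ext z
        show f ((idealBimod I hL hR).r ((c • x : ↥I) : A) z) =
          c • f ((idealBimod I hL hR).r (x : A) z)
        rw [← map_smul]
        congr 1
        exact Subtype.ext (mul_smul_comm c (z : A) (x : A)) }
    ‖f‖ (fun x => by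
      refine (ContinuousLinearMap.opNorm_comp_le _ _).trans ?_
      have hx : ‖(idealBimod I hL hR).r (x : A)‖ ≤ ‖x‖ := by
        refine ContinuousLinearMap.opNorm_le_bound _ (norm_nonneg x) fun z => ?_
        calc ‖(idealBimod I hL hR).r (x : A) z‖ = ‖(z : A) * (x : A)‖ := rfl
          _ ≤ ‖(z : A)‖ * ‖(x : A)‖ := norm_mul_le _ _
          _ = ‖x‖ * ‖z‖ := mul_comm _ _
      exact mul_le_mul_of_nonneg_left hx (norm_nonneg f))

/-- The first Arens product of $F, G ∈ I^{**}$, evaluated at $f ∈ I^*$: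
$(F□G)(f) = F(G·f)$ where $(G·f)(x) = G(f·x)$ and $(f·x)(y) = f(xy)$. -/
noncomputable def firstArens (I : Submodule ℂ A)
    (hL : ∀ a : A, ∀ x ∈ I, a * x ∈ I) (hR : ∀ a : A, ∀ x ∈ I, x * a ∈ I)
    (F G : (↥I →L[ℂ] ℂ) →L[ℂ] ℂ) (f : ↥I →L[ℂ] ℂ) : ℂ :=
  F (G.comp (lmap I hL hR f))

/-- The second Arens product of $F, G ∈ I^{**}$, evaluated at $f ∈ I^*$:
$(F◇G)(f) = G(F·f)$ where $(F·f)(x) = F(x·f)$ and $(x·f)(y) = f(yx)$. -/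
noncomputable def secondArens (I : Submodule ℂ A)
    (hL : ∀ a : A, ∀ x ∈ I, a * x ∈ I) (hR : ∀ a : A, ∀ x ∈ I, x * a ∈ I)
    (F G : (↥I →L[ℂ] ℂ) →L[ℂ] ℂ) (f : ↥I →L[ℂ] ℂ) : ℂ :=
  G (F.comp (rmap I hL hR f))

theorem exists_tendsto_apply_of_norm_le {𝕜 E ι : Type*} [NontriviallyNormedField 𝕜]
    [ProperSpace 𝕜] [SeminormedAddCommGroup E] [NormedSpace 𝕜 E]
    (u : Ultrafilter ι) (φ : ι → StrongDual 𝕜 E) {C : ℝ} (hC : ∀ i, ‖φ i‖ ≤ C) :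
    ∃ Φ : StrongDual 𝕜 E, ∀ x, Tendsto (fun i => φ i x) u (𝓝 (Φ x)) := by
  obtain ⟨Φ, -, hΦ⟩ := (WeakDual.isCompact_closedBall (0 : StrongDual 𝕜 E) C).ultrafilter_le_nhds
    (u.map fun i => StrongDual.toWeakDual (φ i))
    (le_principal_iff.2 <| Ultrafilter.mem_map.2 <| univ_mem' fun i => by simpa using hC i)
  exact ⟨Φ, tendsto_iff_forall_eval_tendsto_topDualPairing.1 hΦ⟩

theorem apply_comp_eq_of_tendsto {𝕜 X ι : Type*} [NontriviallyNormedField 𝕜]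
    [SeminormedAddCommGroup X] [NormedSpace 𝕜 X] {q : Filter ι} [q.NeBot] {e : ι → X}
    {E : StrongDual 𝕜 (StrongDual 𝕜 X)} (hE : ∀ f, Tendsto (fun i => f (e i)) q (𝓝 (E f)))
    {T : X →L[𝕜] X} {y : X} (hT : Tendsto (fun i => T (e i)) q (𝓝 y)) (f : StrongDual 𝕜 X) :
    E (f.comp T) = f y :=
  tendsto_nhds_unique (hE _) ((f.continuous.tendsto y).comp hT)

section Arens

variable (I : Submodule ℂ A)
  (hL : ∀ a : A, ∀ x ∈ I, a * x ∈ I) (hR : ∀ a : A, ∀ x ∈ I, x * a ∈ I)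

theorem firstArens_eq_left_of_apply_lmap (E : (↥I →L[ℂ] ℂ) →L[ℂ] ℂ)
    (hE : ∀ f x, E (lmap I hL hR f x) = f x) (F : (↥I →L[ℂ] ℂ) →L[ℂ] ℂ) (f : ↥I →L[ℂ] ℂ) :
    firstArens I hL hR F E f = F f :=
  congrArg F (ContinuousLinearMap.ext (hE f))

theorem secondArens_eq_right_of_apply_rmap (E : (↥I →L[ℂ] ℂ) →L[ℂ] ℂ)
    (hE : ∀ f x, E (rmap I hL hR f x) = f x) (F : (↥I →L[ℂ] ℂ) →L[ℂ] ℂ) (f : ↥I →L[ℂ] ℂ) :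
    secondArens I hL hR E F f = F f :=
  congrArg F (ContinuousLinearMap.ext (hE f))

theorem firstArens_dual_dual_l (F G : (↥I →L[ℂ] ℂ) →L[ℂ] ℂ) (a : A) (f : ↥I →L[ℂ] ℂ) :
    firstArens I hL hR F ((idealBimod I hL hR).dual.dual.l a G) f =
      firstArens I hL hR ((idealBimod I hL hR).dual.dual.r a F) G f := by
  refine congrArg F (ContinuousLinearMap.ext fun x => congrArg G ?_)
  ext y
  exact congrArg f (Subtype.ext (mul_assoc (x : A) a y).symm)

theorem dual_dual_l_eq_r_of_firstArens_unit {E : (↥I →L[ℂ] ℂ) →L[ℂ] ℂ}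
    (hleft : ∀ F f, firstArens I hL hR E F f = F f)
    (hright : ∀ F f, firstArens I hL hR F E f = F f) (a : A) :
    (idealBimod I hL hR).dual.dual.l a E = (idealBimod I hL hR).dual.dual.r a E := by
  ext f
  calc (idealBimod I hL hR).dual.dual.l a E f
      = firstArens I hL hR E ((idealBimod I hL hR).dual.dual.l a E) f := (hleft _ f).symm
    _ = firstArens I hL hR ((idealBimod I hL hR).dual.dual.r a E) E f :=
        firstArens_dual_dual_l I hL hR E E a f
    _ = (idealBimod I hL hR).dual.dual.r a E f := hright _ f

theorem firstArens_unit_of_tendsto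
    (harens : ∀ F G f, firstArens I hL hR F G f = secondArens I hL hR F G f)
    {ι : Type*} {q : Filter ι} [q.NeBot] {e : ι → ↥I}
    (hleft : ∀ x : ↥I, Tendsto (fun i => (e i : A) * (x : A)) q (𝓝 (x : A)))
    (hright : ∀ x : ↥I, Tendsto (fun i => (x : A) * (e i : A)) q (𝓝 (x : A)))
    {E : (↥I →L[ℂ] ℂ) →L[ℂ] ℂ} (hE : ∀ f, Tendsto (fun i => f (e i)) q (𝓝 (E f)))
    (F : (↥I →L[ℂ] ℂ) →L[ℂ] ℂ) (f : ↥I →L[ℂ] ℂ) :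
    firstArens I hL hR E F f = F f ∧ firstArens I hL hR F E f = F f :=
  ⟨(harens E F f).trans <| secondArens_eq_right_of_apply_rmap I hL hR E
      (fun f x => apply_comp_eq_of_tendsto hE (tendsto_subtype_rng.2 (hleft x)) f) F f,
    firstArens_eq_left_of_apply_lmap I hL hR E
      (fun f x => apply_comp_eq_of_tendsto hE (tendsto_subtype_rng.2 (hright x)) f) F f⟩

theorem dual_dual_l_eq_r_of_tendsto
    (harens : ∀ F G f, firstArens I hL hR F G f = secondArens I hL hR F G f)
    {ι : Type*} {q : Filter ι} [q.NeBot] {e : ι → ↥I}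
    (hleft : ∀ x : ↥I, Tendsto (fun i => (e i : A) * (x : A)) q (𝓝 (x : A)))
    (hright : ∀ x : ↥I, Tendsto (fun i => (x : A) * (e i : A)) q (𝓝 (x : A)))
    {E : (↥I →L[ℂ] ℂ) →L[ℂ] ℂ} (hE : ∀ f, Tendsto (fun i => f (e i)) q (𝓝 (E f))) (a : A) :
    (idealBimod I hL hR).dual.dual.l a E = (idealBimod I hL hR).dual.dual.r a E :=
  have hunit := firstArens_unit_of_tendsto I hL hR harens hleft hright hE
  dual_dual_l_eq_r_of_firstArens_unit I hL hR (fun F f => (hunit F f).1)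
    (fun F f => (hunit F f).2) a

end Arens

theorem stmt_7
    {A : Type*} [NormedRing A] [NormedAlgebra ℂ A]
    (I : Submodule ℂ A)
    (hL : ∀ a : A, ∀ x ∈ I, a * x ∈ I) (hR : ∀ a : A, ∀ x ∈ I, x * a ∈ I)
    (harens : ∀ (F G : (↥I →L[ℂ] ℂ) →L[ℂ] ℂ) (f : ↥I →L[ℂ] ℂ),
        firstArens I hL hR F G f = secondArens I hL hR F G f)
    (ι : Type*) (p : Filter ι) (e : ι → ↥I)
    (hb : ∃ C : ℝ, ∀ i, ‖e i‖ ≤ C)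
    (hai : ∀ x : ↥I, Tendsto (fun i => (e i : A) * (x : A)) p (𝓝 (x : A)) ∧
                     Tendsto (fun i => (x : A) * (e i : A)) p (𝓝 (x : A))) :
    (∀ (a : A) (f : ↥I →L[ℂ] ℂ),
        Tendsto (fun i => f ⟨a * (e i : A) - (e i : A) * a,
          I.sub_mem (hL a _ (e i).2) (hR a _ (e i).2)⟩) p (𝓝 0)) ∧
    (∀ E : (↥I →L[ℂ] ℂ) →L[ℂ] ℂ,
        (∃ q : Filter ι, q ≤ p ∧ q.NeBot ∧
            ∀ f : ↥I →L[ℂ] ℂ, Tendsto (fun i => f (e i)) q (𝓝 (E f))) →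
        (∀ (F : (↥I →L[ℂ] ℂ) →L[ℂ] ℂ) (f : ↥I →L[ℂ] ℂ),
            firstArens I hL hR E F f = F f ∧ firstArens I hL hR F E f = F f) ∧
        (∀ a : A, ((idealBimod I hL hR).dual.dual).l a E =
                  ((idealBimod I hL hR).dual.dual).r a E)) := by
  have hleft {q : Filter ι} (hq : q ≤ p) x := (hai x).1.mono_left hq
  have hright {q : Filter ι} (hq : q ≤ p) x := (hai x).2.mono_left hq
  refine ⟨fun a f => (tendsto_iff_ultrafilter _ _ _).2 fun u hu => ?_,
    fun E ⟨q, hqp, _, hE⟩ => ⟨firstArens_unit_of_tendsto I hL hR harens (hleft hqp) (hright hqp) hE,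
      dual_dual_l_eq_r_of_tendsto I hL hR harens (hleft hqp) (hright hqp) hE⟩⟩
  obtain ⟨C, hC⟩ := hb
  obtain ⟨E, hE⟩ := exists_tendsto_apply_of_norm_le u
    (fun i => NormedSpace.inclusionInDoubleDual ℂ I (e i))
    fun i => (NormedSpace.double_dual_bound ℂ I (e i)).trans (hC i)
  have hcentral : E (f.comp ((idealBimod I hL hR).l a)) = E (f.comp ((idealBimod I hL hR).r a)) :=
    congrArg (· f) (dual_dual_l_eq_r_of_tendsto I hL hR harens (hleft hu) (hright hu) hE a)
  have hlim := (hE (f.comp ((idealBimod I hL hR).l a))).sub (hE (f.comp ((idealBimod I hL hR).r a)))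
  rw [hcentral, sub_self] at hlim
  exact hlim.congr fun i =>
    (map_sub f ((idealBimod I hL hR).l a (e i)) ((idealBimod I hL hR).r a (e i))).symm

end Paper
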